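/- Let U : X → (0,∞) be measurable, let (u_n) be the Fortet scheme with pointwise limit u_*, and let x₀ ∈ X be such that p(x₀,y) > 0 for ν-almost every y and such that there exist r > 1 and c > 0 with ∫_Y (p(x,y)/p(x₀,y))^r p(x₀,y) Ψ[U](y)⁻¹ dν(y) ≤ c·U(x)^r for all x ∈ X. If Φ[u_*](x₀) = 0, then the sequence (Φ[u_n]/U) converges uniformly to 0, i.e. lim_{n→∞} sup_{x∈X} Φ[u_n](x)/U(x) = 0. -/

import Mathlib

open MeasureTheory ENNReal Filter Topology

noncomputable section

/-- `Ψ[u](y) = ∫_X p(x',y) u(x')⁻¹ dμ(x')`. -/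
def fortetPsi {X Y : Type*} [MeasurableSpace X]
    (p : X → Y → ℝ≥0∞) (μ : Measure X) (u : X → ℝ≥0∞) (y : Y) : ℝ≥0∞ :=
  ∫⁻ x, p x y * (u x)⁻¹ ∂μ

/-- The Fortet mapping `Φ[u](x) = ∫_Y p(x,y) Ψ[u](y)⁻¹ dν(y)`. -/
def fortetPhi {X Y : Type*} [MeasurableSpace X] [MeasurableSpace Y]
    (p : X → Y → ℝ≥0∞) (μ : Measure X) (ν : Measure Y) (u : X → ℝ≥0∞) (x : X) : ℝ≥0∞ :=
  ∫⁻ y, p x y * (fortetPsi p μ u y)⁻¹ ∂ν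

/-- The Fortet scheme: `fortetSeq p μ ν U n` is `u_{n+1}`, i.e. `u₁ = U` and
`u_{n+1} = max (U/(n+1)) (min (Φ[u_n]) U)`. -/
def fortetSeq {X Y : Type*} [MeasurableSpace X] [MeasurableSpace Y]
    (p : X → Y → ℝ≥0∞) (μ : Measure X) (ν : Measure Y) (U : X → ℝ≥0∞) :
    ℕ → X → ℝ≥0∞
  | 0 => U
  | n + 1 => fun x =>
      max (U x / (n + 2)) (min (fortetPhi p μ ν (fortetSeq p μ ν U n) x) (U x))

/-! Since every iterate satisfies `u_n ≤ U`, we have `Ψ[U] ≤ Ψ[u_n]`. Writing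
`p(x,·) Ψ[u_n]⁻¹ ≤ (p(x,·)/p(x₀,·)) (p(x₀,·) Ψ[U]⁻¹)^(1/r) · (p(x₀,·) Ψ[u_n]⁻¹)^(1/q)` with `q` the
conjugate exponent of `r`, Hölder's inequality and the integrability hypothesis give
`Φ[u_n](x) ≤ c^(1/r) Φ[u_n](x₀)^(1/q) U(x)` uniformly in `x`. Finally `Φ[u_n](x₀) → 0`: by Fatou,
`Ψ[u_*] ≤ liminf Ψ[u_n]`, and by reverse Fatou (dominated by `p(x₀,·) Ψ[U]⁻¹`, integrable by the
hypothesis at `x = x₀`), `limsup Φ[u_n](x₀) ≤ Φ[u_*](x₀) = 0`. -/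

namespace ENNReal

theorem mul_inv_le_div_mul_rpow_mul_rpow {a b s t : ℝ≥0∞} {r q : ℝ} (hrq : r.HolderConjugate q)
    (hb₀ : b ≠ 0) (hb : b ≠ ∞) (hst : s ≤ t) :
    a * t⁻¹ ≤ a / b * (b * s⁻¹) ^ (1 / r) * (b * t⁻¹) ^ (1 / q) := by
  have hr : (0 : ℝ) ≤ 1 / r := hrq.one_div_nonneg
  have hq : (0 : ℝ) ≤ 1 / q := hrq.symm.one_div_nonneg
  have split (z : ℝ≥0∞) : z = z ^ (1 / r) * z ^ (1 / q) := by
    rw [← ENNReal.rpow_add_of_nonneg (x := z) _ _ hr hq, one_div, one_div,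
      hrq.inv_add_inv_eq_one, rpow_one]
  calc a * t⁻¹ = a / b * (b ^ (1 / r) * b ^ (1 / q)) * ((t⁻¹) ^ (1 / r) * (t⁻¹) ^ (1 / q)) := by
        rw [← split, ← split, ENNReal.div_mul_cancel hb₀ hb]
    _ ≤ a / b * (b ^ (1 / r) * b ^ (1 / q)) * ((s⁻¹) ^ (1 / r) * (t⁻¹) ^ (1 / q)) := by
        gcongr
    _ = a / b * (b * s⁻¹) ^ (1 / r) * (b * t⁻¹) ^ (1 / q) := by
        rw [mul_rpow_of_nonneg _ _ hr, mul_rpow_of_nonneg _ _ hq]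
        ring

end ENNReal

section Fortet

variable {X Y : Type*} [MeasurableSpace X] {μ : Measure X} {p : X → Y → ℝ≥0∞}
  {u v U : X → ℝ≥0∞}

theorem fortetPsi_anti (huv : u ≤ v) : fortetPsi p μ v ≤ fortetPsi p μ u := fun _ =>
  lintegral_mono fun x => mul_le_mul_right (ENNReal.inv_le_inv' (huv x)) _

variable [MeasurableSpace Y] {ν : Measure Y}

theorem measurable_fortetPsi [SFinite μ] (hp : Measurable (Function.uncurry p))
    (hu : Measurable u) : Measurable (fortetPsi p μ u) :=
  Measurable.lintegral_prod_left' (hp.mul (hu.comp measurable_fst).inv)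

theorem measurable_fortetPhi [SFinite μ] [SFinite ν] (hp : Measurable (Function.uncurry p))
    (hu : Measurable u) : Measurable (fortetPhi p μ ν u) :=
  Measurable.lintegral_prod_right' (hp.mul ((measurable_fortetPsi hp hu).comp measurable_snd).inv)

theorem measurable_fortetSeq [SFinite μ] [SFinite ν] (hp : Measurable (Function.uncurry p))
    (hU : Measurable U) (n : ℕ) : Measurable (fortetSeq p μ ν U n) := by
  induction n with
  | zero => exact hU
  | succ n ih => exact (hU.div_const _).max ((measurable_fortetPhi hp ih).min hU)

theorem fortetSeq_le (n : ℕ) : fortetSeq p μ ν U n ≤ U := by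
  intro x
  cases n with
  | zero => exact le_rfl
  | succ n =>
    refine max_le (ENNReal.div_le_of_le_mul' (le_mul_of_one_le_left zero_le ?_)) (min_le_right _ _)
    exact one_le_two.trans le_add_self

theorem fortetPsi_le_liminf (hp : Measurable (Function.uncurry p)) (hp_fin : ∀ x y, p x y ≠ ∞)
    {u : ℕ → X → ℝ≥0∞} (hu : ∀ n, Measurable (u n))
    (hlim : ∀ x, Tendsto (u · x) atTop (𝓝 (v x))) (y : Y) :
    fortetPsi p μ v y ≤ liminf (fun n => fortetPsi p μ (u n) y) atTop :=
  calc fortetPsi p μ v y = ∫⁻ x, liminf (fun n => p x y * (u n x)⁻¹) atTop ∂μ :=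
        lintegral_congr fun x =>
          ((ENNReal.Tendsto.const_mul (hlim x).inv (Or.inr (hp_fin x y))).liminf_eq).symm
    _ ≤ liminf (fun n => fortetPsi p μ (u n) y) atTop :=
        lintegral_liminf_le fun n => (hp.comp measurable_prodMk_right).mul (hu n).inv

theorem limsup_fortetPhi_le [SFinite μ] (hp : Measurable (Function.uncurry p))
    (hp_fin : ∀ x y, p x y ≠ ∞) {u : ℕ → X → ℝ≥0∞} (hu : ∀ n, Measurable (u n))
    (huU : ∀ n, u n ≤ U) (hlim : ∀ x, Tendsto (u · x) atTop (𝓝 (v x))) {x : X}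
    (hdom : ∫⁻ y, p x y * (fortetPsi p μ U y)⁻¹ ∂ν ≠ ∞) :
    limsup (fun n => fortetPhi p μ ν (u n) x) atTop ≤ fortetPhi p μ ν v x :=
  calc limsup (fun n => fortetPhi p μ ν (u n) x) atTop
      ≤ ∫⁻ y, limsup (fun n => p x y * (fortetPsi p μ (u n) y)⁻¹) atTop ∂ν :=
        limsup_lintegral_le _
          (fun n => (hp.comp measurable_prodMk_left).mul (measurable_fortetPsi hp (hu n)).inv)
          (fun n => ae_of_all _ fun y =>
            mul_le_mul_right (ENNReal.inv_le_inv' (fortetPsi_anti (huU n) y)) _) hdom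
    _ ≤ fortetPhi p μ ν v x := lintegral_mono fun y => by
        rw [ENNReal.limsup_const_mul_of_ne_top (hp_fin x y), ← ENNReal.inv_liminf]
        exact mul_le_mul_right (ENNReal.inv_le_inv' (fortetPsi_le_liminf hp hp_fin hu hlim y)) _

theorem fortetPhi_le_rpow_mul_rpow [SFinite μ] (hp : Measurable (Function.uncurry p))
    (hU : Measurable U) (hu : Measurable u) (huU : u ≤ U) {x₀ : X}
    (hx₀_fin : ∀ y, p x₀ y ≠ ∞) (hx₀_pos : ∀ᵐ y ∂ν, 0 < p x₀ y) {r q : ℝ}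
    (hrq : r.HolderConjugate q) (x : X) :
    fortetPhi p μ ν u x ≤
      (∫⁻ y, (p x y / p x₀ y) ^ r * (p x₀ y * (fortetPsi p μ U y)⁻¹) ∂ν) ^ (1 / r) *
        fortetPhi p μ ν u x₀ ^ (1 / q) := by
  have hpx (x) : Measurable (p x) := hp.comp measurable_prodMk_left
  set f := fun y => p x y / p x₀ y * (p x₀ y * (fortetPsi p μ U y)⁻¹) ^ (1 / r)
  set g := fun y => (p x₀ y * (fortetPsi p μ u y)⁻¹) ^ (1 / q)
  have hf : Measurable f := ((hpx x).div (hpx x₀)).mul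
    (((hpx x₀).mul (measurable_fortetPsi hp hU).inv).pow_const _)
  have hg : Measurable g := ((hpx x₀).mul (measurable_fortetPsi hp hu).inv).pow_const _
  calc fortetPhi p μ ν u x ≤ ∫⁻ y, (f * g) y ∂ν := lintegral_mono_ae <| by
        filter_upwards [hx₀_pos] with y hy
        exact ENNReal.mul_inv_le_div_mul_rpow_mul_rpow hrq hy.ne' (hx₀_fin y)
          (fortetPsi_anti huU y)
    _ ≤ (∫⁻ y, f y ^ r ∂ν) ^ (1 / r) * (∫⁻ y, g y ^ q ∂ν) ^ (1 / q) :=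
        ENNReal.lintegral_mul_le_Lp_mul_Lq ν hrq hf.aemeasurable hg.aemeasurable
    _ = _ := by
        simp only [f, g, ENNReal.mul_rpow_of_nonneg _ _ hrq.nonneg, ← ENNReal.rpow_mul,
          one_div_mul_cancel hrq.ne_zero, one_div_mul_cancel hrq.symm.ne_zero, ENNReal.rpow_one]
        rfl

theorem fortetPhi_le_mul_of_lintegral_le [SFinite μ] (hp : Measurable (Function.uncurry p))
    (hU : Measurable U) (hu : Measurable u) (huU : u ≤ U) {x₀ : X}
    (hx₀_fin : ∀ y, p x₀ y ≠ ∞) (hx₀_pos : ∀ᵐ y ∂ν, 0 < p x₀ y) {r q : ℝ}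
    (hrq : r.HolderConjugate q) {c : ℝ≥0∞} {x : X}
    (hx : ∫⁻ y, (p x y / p x₀ y) ^ r * (p x₀ y * (fortetPsi p μ U y)⁻¹) ∂ν ≤ c * U x ^ r) :
    fortetPhi p μ ν u x ≤ c ^ (1 / r) * fortetPhi p μ ν u x₀ ^ (1 / q) * U x :=
  calc fortetPhi p μ ν u x
      ≤ (c * U x ^ r) ^ (1 / r) * fortetPhi p μ ν u x₀ ^ (1 / q) := by
        grw [fortetPhi_le_rpow_mul_rpow hp hU hu huU hx₀_fin hx₀_pos hrq x, hx]
        exact hrq.one_div_nonneg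
    _ = c ^ (1 / r) * fortetPhi p μ ν u x₀ ^ (1 / q) * U x := by
        rw [ENNReal.mul_rpow_of_nonneg _ _ hrq.one_div_nonneg, ← ENNReal.rpow_mul,
          mul_one_div_cancel hrq.ne_zero, ENNReal.rpow_one]
        ring

end Fortet

theorem fortet_uniform_convergence_holder_general
    {X Y : Type*} [MeasurableSpace X] [MeasurableSpace Y]
    (μ : Measure X) (ν : Measure Y)
    [IsProbabilityMeasure μ] [IsProbabilityMeasure ν]
    (p : X → Y → ℝ≥0∞)
    (hp_meas : Measurable (Function.uncurry p))
    (hp_fin : ∀ x y, p x y ≠ ∞)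
    (U : X → ℝ≥0∞) (hU_meas : Measurable U)
    (hU_fin : ∀ x, U x ≠ ∞)
    (ustar : X → ℝ≥0∞)
    (hustar : ∀ x, Tendsto (fun n => fortetSeq p μ ν U n x) atTop (𝓝 (ustar x)))
    (x₀ : X) (hx₀_pos : ∀ᵐ y ∂ν, 0 < p x₀ y)
    (r : ℝ) (hr : 1 < r) (c : ℝ≥0∞) (hc_fin : c ≠ ∞)
    (hHolder : ∀ x, (∫⁻ y, (p x y / p x₀ y) ^ r * (p x₀ y * (fortetPsi p μ U y)⁻¹) ∂ν)
      ≤ c * (U x) ^ r)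
    (hx₀ : fortetPhi p μ ν ustar x₀ = 0) :
    Tendsto (fun n => ⨆ x, fortetPhi p μ ν (fortetSeq p μ ν U n) x / U x)
      atTop (𝓝 0) := by
  have hrq : r.HolderConjugate r.conjExponent := .conjExponent hr
  set Φ₀ := fun n => fortetPhi p μ ν (fortetSeq p μ ν U n) x₀
  have hdom : ∫⁻ y, p x₀ y * (fortetPsi p μ U y)⁻¹ ∂ν ≠ ∞ := by
    refine ne_top_of_le_ne_top (mul_ne_top hc_fin (rpow_ne_top_of_nonneg hrq.nonneg (hU_fin x₀)))
      (le_of_eq_of_le (lintegral_congr_ae ?_) (hHolder x₀))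
    filter_upwards [hx₀_pos] with y hy
    rw [ENNReal.div_self hy.ne' (hp_fin x₀ y), one_rpow, one_mul]
  have hΦ₀ : Tendsto Φ₀ atTop (𝓝 0) := tendsto_of_le_liminf_of_limsup_le bot_le <| hx₀ ▸
    limsup_fortetPhi_le hp_meas hp_fin (measurable_fortetSeq hp_meas hU_meas) fortetSeq_le hustar
      hdom
  have hbound (n : ℕ) : (⨆ x, fortetPhi p μ ν (fortetSeq p μ ν U n) x / U x) ≤
      c ^ (1 / r) * Φ₀ n ^ (1 / r.conjExponent) := iSup_le fun x => div_le_of_le_mul <|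
    fortetPhi_le_mul_of_lintegral_le hp_meas hU_meas (measurable_fortetSeq hp_meas hU_meas n)
      (fortetSeq_le n) (hp_fin x₀) hx₀_pos hrq (hHolder x)
  have hlim : Tendsto (fun n => c ^ (1 / r) * Φ₀ n ^ (1 / r.conjExponent)) atTop (𝓝 0) := by
    simpa [zero_rpow_of_pos (inv_pos.2 hrq.symm.pos)] using ENNReal.Tendsto.const_mul
      (((ENNReal.continuous_rpow_const (y := 1 / r.conjExponent)).tendsto 0).comp hΦ₀)
      (Or.inr (rpow_ne_top_of_nonneg hrq.one_div_nonneg hc_fin))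
  exact tendsto_of_tendsto_of_tendsto_of_le_of_le tendsto_const_nhds hlim (fun _ => zero_le)
    hbound

theorem fortet_uniform_convergence_holder
    {X Y : Type*} [MeasurableSpace X] [MeasurableSpace Y]
    (μ : Measure X) (ν : Measure Y)
    [IsProbabilityMeasure μ] [IsProbabilityMeasure ν]
    (p : X → Y → ℝ≥0∞)
    (hp_meas : Measurable (Function.uncurry p))
    (hp_fin : ∀ x y, p x y ≠ ∞)
    (U : X → ℝ≥0∞) (hU_meas : Measurable U)
    (hU_pos : ∀ x, 0 < U x) (hU_fin : ∀ x, U x ≠ ∞)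
    (ustar : X → ℝ≥0∞)
    (hustar : ∀ x, Tendsto (fun n => fortetSeq p μ ν U n x) atTop (𝓝 (ustar x)))
    (x₀ : X) (hx₀_pos : ∀ᵐ y ∂ν, 0 < p x₀ y)
    (r : ℝ) (hr : 1 < r) (c : ℝ≥0∞) (hc_pos : 0 < c) (hc_fin : c ≠ ∞)
    (hHolder : ∀ x, (∫⁻ y, (p x y / p x₀ y) ^ r * (p x₀ y * (fortetPsi p μ U y)⁻¹) ∂ν)
      ≤ c * (U x) ^ r)
    (hx₀ : fortetPhi p μ ν ustar x₀ = 0) :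
    Tendsto (fun n => ⨆ x, fortetPhi p μ ν (fortetSeq p μ ν U n) x / U x)
      atTop (𝓝 0) :=
  fortet_uniform_convergence_holder_general μ ν p hp_meas hp_fin U hU_meas hU_fin ustar hustar x₀
    hx₀_pos r hr c hc_fin hHolder hx₀
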